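/- Let G be a graph with Δ(G) ≤ k − 1, k ≥ 11, having no nice k-coloring, and let u be a 2-vertex with neighbors x, y and ψ a nice k-coloring of G − uy with ψ(ux) = a. Then for every neighbor z of y, the color a is present at z (on an edge at z if d(z) ≤ 5). -/

import Mathlib

open SimpleGraph

/-- The degree of a vertex `v` in a graph `G` (number of neighbors). -/
noncomputable def deg {V : Type*} (G : SimpleGraph V) (v : V) : ℕ :=
  (G.neighborSet v).ncard

/-- The maximum degree `Δ(G)` of a finite graph. -/
noncomputable def maxDeg {V : Type*} [Fintype V] (G : SimpleGraph V) : ℕ :=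
  Finset.univ.sup (deg G)

/-- A total `k`-coloring of `G`: a coloring of vertices (`cv`) and edges (`ce`) with `k`
colors such that no two adjacent vertices, no two incident edges, and no vertex and
incident edge receive the same color. -/
def IsTotalColoring {V : Type*} (G : SimpleGraph V) (k : ℕ)
    (cv : V → Fin k) (ce : Sym2 V → Fin k) : Prop :=
  (∀ u v, G.Adj u v → cv u ≠ cv v) ∧
  (∀ u v w, G.Adj u v → G.Adj u w → v ≠ w → ce s(u, v) ≠ ce s(u, w)) ∧
  (∀ u v, G.Adj u v → cv u ≠ ce s(u, v))

def HasTotalColoring {V : Type*} (G : SimpleGraph V) (k : ℕ) : Prop :=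
  ∃ cv ce, IsTotalColoring G k cv ce

/-- The total chromatic number `χ''(G)`: the least `k` admitting a total `k`-coloring. -/
noncomputable def totalChromaticNumber {V : Type*} (G : SimpleGraph V) : ℕ :=
  sInf {k | HasTotalColoring G k}

/-- `H` is a minor of `G`: there are pairwise disjoint nonempty connected branch sets in `G`,
one for each vertex of `H`, with an edge of `G` between the branch sets of any two
vertices adjacent in `H`. -/
def HasMinor {V W : Type*} (G : SimpleGraph V) (H : SimpleGraph W) : Prop :=
  ∃ φ : W → Set V,
    (∀ w, (G.induce (φ w)).Connected) ∧
    (∀ w₁ w₂, w₁ ≠ w₂ → Disjoint (φ w₁) (φ w₂)) ∧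
    (∀ w₁ w₂, H.Adj w₁ w₂ → ∃ u ∈ φ w₁, ∃ v ∈ φ w₂, G.Adj u v)

abbrev K5 : SimpleGraph (Fin 5) := ⊤

abbrev K33 : SimpleGraph (Fin 3 ⊕ Fin 3) := completeBipartiteGraph (Fin 3) (Fin 3)

/-- A nice `k`-coloring: a proper coloring of all edges and of all vertices of degree at
least `6`, such that no two adjacent or incident colored elements share a color. -/
def IsNiceColoring {V : Type*} (G : SimpleGraph V) (k : ℕ)
    (cv : V → Fin k) (ce : Sym2 V → Fin k) : Prop :=
  (∀ u v, G.Adj u v → 6 ≤ deg G u → 6 ≤ deg G v → cv u ≠ cv v) ∧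
  (∀ u v w, G.Adj u v → G.Adj u w → v ≠ w → ce s(u, v) ≠ ce s(u, w)) ∧
  (∀ u v, G.Adj u v → 6 ≤ deg G u → cv u ≠ ce s(u, v))

def HasNiceColoring {V : Type*} (G : SimpleGraph V) (k : ℕ) : Prop :=
  ∃ cv ce, IsNiceColoring G k cv ce

/-- A color `c` is missing at `v` if it is used neither on `v` (when `v` is colored,
i.e. has degree at least 6) nor on any edge incident with `v`. -/
def MissingAt {V : Type*} {k : ℕ} (G : SimpleGraph V)
    (cv : V → Fin k) (ce : Sym2 V → Fin k) (v : V) (c : Fin k) : Prop :=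
  (6 ≤ deg G v → cv v ≠ c) ∧ ∀ w, G.Adj v w → ce s(v, w) ≠ c

/-- `G` is planar: it has a drawing in the plane with injective vertex placement and
edges drawn as arcs whose interiors are pairwise disjoint and avoid all vertex points. -/
def IsPlanar {V : Type*} (G : SimpleGraph V) : Prop :=
  ∃ (p : V → ℝ × ℝ) (γ : G.edgeSet → ℝ → ℝ × ℝ),
    Function.Injective p ∧
    (∀ e, ContinuousOn (γ e) (Set.Icc 0 1)) ∧
    (∀ e, Set.InjOn (γ e) (Set.Icc 0 1)) ∧
    (∀ e : G.edgeSet, ∀ u v : V, (e : Sym2 V) = s(u, v) →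
      ({γ e 0, γ e 1} : Set (ℝ × ℝ)) = {p u, p v}) ∧
    (∀ e : G.edgeSet, ∀ w : V, ∀ t ∈ Set.Ioo (0 : ℝ) 1, γ e t ≠ p w) ∧
    (∀ e₁ e₂ : G.edgeSet, e₁ ≠ e₂ → ∀ s ∈ Set.Ioo (0 : ℝ) 1, ∀ t ∈ Set.Ioo (0 : ℝ) 1,
      γ e₁ s ≠ γ e₂ t)

/-- A planar triangulation, i.e. an edge-maximal planar graph. -/
def IsPlanarTriangulation {W : Type*} (H : SimpleGraph W) : Prop :=
  IsPlanar H ∧ ∀ H' : SimpleGraph W, H < H' → ¬ IsPlanar H'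

/-- The Wagner graph `V₈`: the 8-cycle together with its four main diagonals. -/
def wagnerGraph : SimpleGraph (ZMod 8) :=
  SimpleGraph.fromRel (fun i j => j = i + 1 ∨ j = i + 4)

/-!
Suppose `a` were missing at a neighbor `z` of `y`; then `z ≠ u`, as `ux` has color `a`. If `y`
is uncolored in `G - uy`, give `y` a color avoiding its at most five edges and five neighbors,
and `uy` a color avoiding the at most ten colors on the edges at `u` and `y` and on `y`
(here `k ≥ 11`). Otherwise at most `Δ(G) ≤ k - 1` colors are present at `y`, so some color `c`
is missing at `y`. If `c ≠ a`, put `c` on `uy`. If `c = a`, then `a` is missing at both ends of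
`yz`: recolor `yz` with `a` and give `uy` the old color of `yz`. Either way `G` gets a nice
`k`-coloring.
-/

open Function

lemma Fin.exists_notMem_of_ncard_lt {k : ℕ} {s : Set (Fin k)} (h : s.ncard < k) :
    ∃ c, c ∉ s := by
  by_contra! hs
  rw [Set.eq_univ_of_forall hs, Set.ncard_univ, Nat.card_eq_fintype_card,
    Fintype.card_fin] at h
  exact lt_irrefl k h

section Degree

variable {V : Type*} {G : SimpleGraph V} {u x y v : V}

lemma deg_le_maxDeg [Fintype V] (v : V) : deg G v ≤ maxDeg G :=
  Finset.le_sup (Finset.mem_univ v)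

lemma neighborSet_deleteEdges_of_ne (hu : v ≠ u) (hy : v ≠ y) :
    (G.deleteEdges {s(u, y)}).neighborSet v = G.neighborSet v := by
  ext w
  simp [hu, hy]

lemma neighborSet_deleteEdges_self :
    (G.deleteEdges {s(u, y)}).neighborSet y = G.neighborSet y \ {u} := by
  ext w
  simp only [mem_neighborSet, deleteEdges_adj, Set.mem_singleton_iff, Set.mem_sdiff,
    Sym2.eq_iff]
  grind [G.ne_of_adj]

lemma deg_deleteEdges_of_ne (hu : v ≠ u) (hy : v ≠ y) :
    deg (G.deleteEdges {s(u, y)}) v = deg G v := by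
  rw [deg, deg, neighborSet_deleteEdges_of_ne hu hy]

lemma deg_deleteEdges_lt [Finite V] (huy : G.Adj u y) :
    deg (G.deleteEdges {s(u, y)}) y < deg G y := by
  rw [deg, deg, neighborSet_deleteEdges_self]
  exact Set.ncard_sdiff_singleton_lt_of_mem huy.symm

lemma adj_deleteEdges_of_ne {w : V} (h : G.Adj y w) (hw : w ≠ u) :
    (G.deleteEdges {s(u, y)}).Adj y w := by
  refine (deleteEdges_adj ..).mpr ⟨h, fun e => ?_⟩
  rcases Sym2.eq_iff.mp e with ⟨-, e⟩ | ⟨-, e⟩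
  exacts [h.ne e.symm, hw e]

lemma neighborSet_deleteEdges_eq_singleton [Finite V] (hux : G.Adj u x) (huy : G.Adj u y)
    (hxy : x ≠ y) (hu : deg G u = 2) :
    (G.deleteEdges {s(u, y)}).neighborSet u = {x} := by
  have hN : G.neighborSet u = {x, y} := by
    refine (Set.eq_of_subset_of_ncard_le ?_ ?_).symm
    · exact Set.insert_subset hux (Set.singleton_subset_iff.mpr huy)
    · rw [← deg, hu, Set.ncard_pair hxy]
  rw [Sym2.eq_swap, neighborSet_deleteEdges_self, hN]
  ext w
  simp only [Set.mem_sdiff, Set.mem_insert_iff, Set.mem_singleton_iff]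
  constructor
  · rintro ⟨rfl | rfl, hw⟩ <;> simp_all
  · rintro rfl
    exact ⟨Or.inl rfl, hxy⟩

end Degree

section Coloring

variable {V : Type*} {k : ℕ} {H : SimpleGraph V} {cv : V → Fin k} {ce : Sym2 V → Fin k}

def edgeColorsAt (H : SimpleGraph V) (ce : Sym2 V → Fin k) (v : V) : Set (Fin k) :=
  (fun w => ce s(v, w)) '' H.neighborSet v

lemma ncard_edgeColorsAt_le [Finite V] (v : V) : (edgeColorsAt H ce v).ncard ≤ deg H v :=
  Set.ncard_image_le

lemma exists_missingAt [Finite V] {v : V} (h : deg H v + 1 < k) :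
    ∃ c, MissingAt H cv ce v c := by
  have hE := ncard_edgeColorsAt_le (H := H) (ce := ce) v
  obtain ⟨c, hc⟩ := Fin.exists_notMem_of_ncard_lt (s := insert (cv v) (edgeColorsAt H ce v))
    ((Set.ncard_insert_le _ _).trans_lt (by omega))
  exact ⟨c, fun _ h => hc (h ▸ Set.mem_insert _ _),
    fun w hw h => hc (Set.mem_insert_of_mem _ ⟨w, hw, h⟩)⟩

lemma update_ne_update_of_deleteEdges_le [DecidableEq V] {G : SimpleGraph V} {u y : V}
    {c : Fin k} (hGH : G.deleteEdges {s(u, y)} ≤ H)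
    (hce : ∀ p q r, H.Adj p q → H.Adj p r → q ≠ r → ce s(p, q) ≠ ce s(p, r))
    (hu : ∀ w, H.Adj u w → ce s(u, w) ≠ c) (hy : ∀ w, H.Adj y w → ce s(y, w) ≠ c) :
    ∀ p q r, G.Adj p q → G.Adj p r → q ≠ r →
      update ce s(u, y) c s(p, q) ≠ update ce s(u, y) c s(p, r) := by
  have hH : ∀ p q, G.Adj p q → s(p, q) ≠ s(u, y) → H.Adj p q :=
    fun p q hpq hne => hGH ((deleteEdges_adj ..).mpr ⟨hpq, hne⟩)
  have hfresh : ∀ p q r, G.Adj p r → s(p, q) = s(u, y) → q ≠ r → ce s(p, r) ≠ c := by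
    intro p q r hpr hpq hqr
    have hr := hH p r hpr fun h => hqr (Sym2.congr_right.mp (hpq.trans h.symm))
    rcases Sym2.eq_iff.mp hpq with ⟨rfl, rfl⟩ | ⟨rfl, rfl⟩
    exacts [hu r hr, hy r hr]
  intro p q r hpq hpr hqr
  by_cases hq : s(p, q) = s(u, y)
  · have hr : s(p, r) ≠ s(u, y) := fun h => hqr (Sym2.congr_right.mp (hq.trans h.symm))
    rw [update_of_ne hr, hq, update_self]
    exact (hfresh p q r hpr hq hqr).symm
  · rw [update_of_ne hq]
    by_cases hr : s(p, r) = s(u, y)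
    · rw [hr, update_self]
      exact hfresh p r q hpq hr (Ne.symm hqr)
    · rw [update_of_ne hr]
      exact hce p q r (hH p q hpq hq) (hH p r hpr hr) hqr

namespace IsNiceColoring

lemma update_vertex [DecidableEq V] (hψ : IsNiceColoring H k cv ce) {v : V}
    (hv : deg H v < 6) (d : Fin k) : IsNiceColoring H k (update cv v d) ce := by
  have hfix : ∀ p, 6 ≤ deg H p → update cv v d p = cv p :=
    fun p hp => update_of_ne (by rintro rfl; omega) _ _
  refine ⟨fun p q hpq hp hq => ?_, hψ.2.1, fun p q hpq hp => ?_⟩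
  · rw [hfix p hp, hfix q hq]
    exact hψ.1 p q hpq hp hq
  · rw [hfix p hp]
    exact hψ.2.2 p q hpq hp

lemma recolorEdge [DecidableEq V] (hψ : IsNiceColoring H k cv ce) {y z : V} {c : Fin k}
    (hy : MissingAt H cv ce y c) (hz : MissingAt H cv ce z c) :
    IsNiceColoring H k cv (update ce s(y, z) c) := by
  refine ⟨hψ.1, update_ne_update_of_deleteEdges_le (deleteEdges_le _) hψ.2.1 hy.2 hz.2,
    fun p q hpq hp => ?_⟩
  by_cases he : s(p, q) = s(y, z)
  · rw [he, update_self]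
    rcases Sym2.eq_iff.mp he with ⟨rfl, -⟩ | ⟨rfl, -⟩
    exacts [hy.1 hp, hz.1 hp]
  · rw [update_of_ne he]
    exact hψ.2.2 p q hpq hp

lemma missingAt_recolorEdge [DecidableEq V] (hψ : IsNiceColoring H k cv ce) {y z : V}
    {a : Fin k} (hyz : H.Adj y z) (ha : MissingAt H cv ce y a) :
    MissingAt H cv (update ce s(y, z) a) y (ce s(y, z)) := by
  refine ⟨fun hy => hψ.2.2 y z hyz hy, fun w hw => ?_⟩
  by_cases hwz : w = z
  · subst hwz
    rw [update_self]
    exact (ha.2 w hw).symm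
  · rw [update_of_ne (mt Sym2.congr_right.mp hwz)]
    exact hψ.2.1 y w z hw hyz hwz

lemma of_deleteEdges [DecidableEq V] {G : SimpleGraph V} {u y : V} {c : Fin k}
    (hψ : IsNiceColoring (G.deleteEdges {s(u, y)}) k cv ce) (hu : deg G u < 6)
    (hcu : ∀ w, (G.deleteEdges {s(u, y)}).Adj u w → ce s(u, w) ≠ c)
    (hcy : ∀ w, (G.deleteEdges {s(u, y)}).Adj y w → ce s(y, w) ≠ c)
    (hy : 6 ≤ deg G y → cv y ≠ c ∧
      (∀ w, (G.deleteEdges {s(u, y)}).Adj y w → cv y ≠ ce s(y, w)) ∧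
      ∀ w, G.Adj y w → 6 ≤ deg G w → cv y ≠ cv w) :
    IsNiceColoring G k cv (update ce s(u, y) c) := by
  have hne_u : ∀ p, 6 ≤ deg G p → p ≠ u := by rintro p hp rfl; omega
  have hsne : ∀ p q, p ≠ u → (p ≠ y ∨ q ≠ u) → s(p, q) ≠ s(u, y) := by
    intro p q hpu hpq h
    rcases Sym2.eq_iff.mp h with ⟨hp, -⟩ | ⟨hp, hq⟩ <;> tauto
  have hadj : ∀ p q, G.Adj p q → p ≠ u → (p ≠ y ∨ q ≠ u) →
      (G.deleteEdges {s(u, y)}).Adj p q :=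
    fun p q hpq hpu h => (deleteEdges_adj ..).mpr ⟨hpq, hsne p q hpu h⟩
  have hdeg : ∀ p, 6 ≤ deg G p → p ≠ y → 6 ≤ deg (G.deleteEdges {s(u, y)}) p := by
    intro p hp hpy
    rwa [deg_deleteEdges_of_ne (hne_u p hp) hpy]
  refine ⟨fun p q hpq hp hq => ?_, update_ne_update_of_deleteEdges_le le_rfl hψ.2.1 hcu hcy,
    fun p q hpq hp => ?_⟩
  · by_cases hpy : p = y
    · subst hpy
      exact (hy hp).2.2 q hpq hq
    by_cases hqy : q = y
    · subst hqy
      exact ((hy hq).2.2 p hpq.symm hp).symm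
    exact hψ.1 p q (hadj p q hpq (hne_u p hp) (.inl hpy)) (hdeg p hp hpy) (hdeg q hq hqy)
  · by_cases hpy : p = y
    · subst hpy
      by_cases hqu : q = u
      · subst hqu
        rw [Sym2.eq_swap, update_self]
        exact (hy hp).1
      · rw [update_of_ne (hsne p q (hne_u p hp) (.inr hqu))]
        exact (hy hp).2.1 q (hadj p q hpq (hne_u p hp) (.inr hqu))
    · rw [update_of_ne (hsne p q (hne_u p hp) (.inl hpy))]
      exact hψ.2.2 p q (hadj p q hpq (hne_u p hp) (.inl hpy)) (hdeg p hp hpy)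

lemma of_deleteEdges_of_six_le [DecidableEq V] {G : SimpleGraph V} {u y : V} {c : Fin k}
    (hψ : IsNiceColoring (G.deleteEdges {s(u, y)}) k cv ce) (hu : deg G u < 6)
    (hy6 : 6 ≤ deg (G.deleteEdges {s(u, y)}) y)
    (hcu : ∀ w, (G.deleteEdges {s(u, y)}).Adj u w → ce s(u, w) ≠ c)
    (hcy : MissingAt (G.deleteEdges {s(u, y)}) cv ce y c) :
    IsNiceColoring G k cv (update ce s(u, y) c) := by
  refine hψ.of_deleteEdges hu hcu hcy.2 fun _ => ⟨hcy.1 hy6, fun w hw => hψ.2.2 y w hw hy6,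
    fun w hw hw6 => ?_⟩
  have hwu : w ≠ u := by rintro rfl; omega
  exact hψ.1 y w (adj_deleteEdges_of_ne hw hwu) hy6 (by rwa [deg_deleteEdges_of_ne hwu hw.ne'])

end IsNiceColoring

end Coloring

lemma hasNiceColoring_of_deg_deleteEdges_lt_six {V : Type*} [Finite V] {G : SimpleGraph V}
    {k : ℕ} {u y : V} {cv : V → Fin k} {ce : Sym2 V → Fin k} (hk : 11 ≤ k)
    (hψ : IsNiceColoring (G.deleteEdges {s(u, y)}) k cv ce) (huy : G.Adj u y)
    (hu : deg G u < 6) (hy : deg (G.deleteEdges {s(u, y)}) y < 6) :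
    HasNiceColoring G k := by
  classical
  set G' := G.deleteEdges {s(u, y)}
  have hu' : deg G' u < deg G u := by
    simpa only [G', Sym2.eq_swap] using deg_deleteEdges_lt huy.symm
  have hEu := ncard_edgeColorsAt_le (H := G') (ce := ce) u
  have hEy := ncard_edgeColorsAt_le (H := G') (ce := ce) y
  have hNy : (cv '' G'.neighborSet y).ncard ≤ deg G' y := Set.ncard_image_le
  obtain ⟨d, hd⟩ := Fin.exists_notMem_of_ncard_lt
    (s := edgeColorsAt G' ce y ∪ cv '' G'.neighborSet y) <| by
      linarith [Set.ncard_union_le (edgeColorsAt G' ce y) (cv '' G'.neighborSet y)]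
  obtain ⟨c, hc⟩ := Fin.exists_notMem_of_ncard_lt
    (s := edgeColorsAt G' ce u ∪ insert d (edgeColorsAt G' ce y)) <| by
      linarith [Set.ncard_union_le (edgeColorsAt G' ce u) (insert d (edgeColorsAt G' ce y)),
        Set.ncard_insert_le d (edgeColorsAt G' ce y)]
  simp only [Set.mem_union, Set.mem_insert_iff, not_or] at hd hc
  refine ⟨update cv y d, update ce s(u, y) c,
    (hψ.update_vertex hy d).of_deleteEdges hu (fun w hw h => hc.1 ⟨w, hw, h⟩)
      (fun w hw h => hc.2.2 ⟨w, hw, h⟩) fun _ => ?_⟩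
  rw [update_self]
  refine ⟨Ne.symm hc.2.1, fun w hw h => hd.1 ⟨w, hw, h.symm⟩, fun w hw hw6 h => ?_⟩
  have hwu : w ≠ u := by rintro rfl; omega
  rw [update_of_ne hw.ne'] at h
  exact hd.2 ⟨w, adj_deleteEdges_of_ne hw hwu, h.symm⟩

/-- Claim 1(ii): with `G`, `u`, `x`, `y`, `ψ` as in Claim 1, the color `a = ψ(ux)` is
present at every neighbor `z` of `y`. -/
theorem present_at_neighbors {V : Type*} [Fintype V] (G : SimpleGraph V) (k : ℕ)
    (hk : 11 ≤ k) (hΔ : maxDeg G ≤ k - 1)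
    (hG : ¬ HasNiceColoring G k)
    (u x y : V) (hux : G.Adj u x) (huy : G.Adj u y) (hxy : x ≠ y)
    (hu2 : deg G u = 2)
    (cv : V → Fin k) (ce : Sym2 V → Fin k)
    (hψ : IsNiceColoring (G.deleteEdges {s(u, y)}) k cv ce)
    (a : Fin k) (ha : ce s(u, x) = a) :
    ∀ z : V, G.Adj y z → ¬ MissingAt (G.deleteEdges {s(u, y)}) cv ce z a := by
  classical
  intro z hyz hza
  subst ha
  set G' := G.deleteEdges {s(u, y)}
  have hu6 : deg G u < 6 := by omega
  have hNu : ∀ w, G'.Adj u w ↔ w = x := fun w =>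
    Set.ext_iff.mp (neighborSet_deleteEdges_eq_singleton hux huy hxy hu2) w
  have hzu : z ≠ u := by rintro rfl; exact hza.2 x ((hNu x).mpr rfl) rfl
  have hyz' : G'.Adj y z := adj_deleteEdges_of_ne hyz hzu
  apply hG
  rcases lt_or_ge (deg G' y) 6 with hy6 | hy6
  · exact hasNiceColoring_of_deg_deleteEdges_lt_six hk hψ huy hu6 hy6
  have hyk : deg G' y + 1 < k := by
    have : deg G' y < deg G y := deg_deleteEdges_lt huy
    have := deg_le_maxDeg (G := G) y
    omega
  obtain ⟨c, hc⟩ := exists_missingAt (cv := cv) (ce := ce) hyk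
  by_cases hca : c = ce s(u, x)
  · subst hca
    refine ⟨cv, _, (hψ.recolorEdge hc hza).of_deleteEdges_of_six_le hu6 hy6 (fun w hw => ?_)
      (hψ.missingAt_recolorEdge hyz' hc)⟩
    obtain rfl := (hNu w).mp hw
    rw [update_of_ne (by simp [huy.ne, hzu.symm])]
    exact (hc.2 z hyz').symm
  · refine ⟨cv, _, hψ.of_deleteEdges_of_six_le hu6 hy6 (fun w hw => ?_) hc⟩
    obtain rfl := (hNu w).mp hw
    exact Ne.symm hca
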